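/- Let α ∈ (0, 1/2), T > 0, η₀ ≥ 0, let b : ℝ → ℝ be Lipschitz and let ζ : [0,T] → ℝ be (1−α)-Hölder continuous with ζ₀ = 0. For ε > 0 let x^ε be the unique continuous solution of x^ε_t = η₀ + ζ_t + ∫₀ᵗ [ b(x^ε_s) + (1/ε) f(x^ε_s) ] ds, and let G be the uniform limit of x^ε as ε → 0. Then: (i) for every t ∈ [0,T] the limit y_t := lim_{ε→0} (1/ε) ∫₀ᵗ f(x^ε_s) ds exists and is finite; (ii) G_t ≥ 0 for all t; (iii) G_t = η₀ + ζ_t + ∫₀ᵗ b(G_s) ds + y_t for all t; (iv) y₀ = 0 and y is continuous and nondecreasing; (v) ∫₀ᵗ G_s dy_s = 0 for all t ∈ [0,T], where the integral is with respect to the Lebesgue–Stieltjes measure of y; and (vi) G is (1−α)-Hölder continuous on [0,T]. -/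

import Mathlib

/-!
Set `z t = η₀ + ζ t + ∫₀ᵗ b (G s) ds` and `y = G - z`. Passing to the limit in the equation for
`x ε` shows that `(1 / ε) ∫₀ᵗ f (x ε)` converges to `y t`. As `f ≥ 0`, `y` is nondecreasing.
Where `G > 0` on an interval, uniform convergence gives `x ε > 0` there for small `ε`, so
`f (x ε) = 0` and `y` is constant; where `G < 0` on an interval, the penalty integral would grow
like `1 / ε`, so `G ≥ 0`. Hence `dy` is carried by `{G = 0}`, and across `[s, t]` the increment
of `y` is an increment of `z` between the first and the last zero of `G` in `[s, t]`, so `y`, and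
with it `G = z + y`, inherits the Hölder bound of `z`.
-/

open MeasureTheory Set Filter Topology

noncomputable section

/-- `f` is `γ`-Hölder continuous on `[a,b]`. -/
def HolderOnIcc (γ a b : ℝ) (f : ℝ → ℝ) : Prop :=
  ∃ C : ℝ, 0 ≤ C ∧ ∀ s ∈ Set.Icc a b, ∀ t ∈ Set.Icc a b, |f t - f s| ≤ C * |t - s| ^ γ

/-- The penalization function `f`: a `C²_b` nonincreasing function vanishing on `[0, ∞)`
with `0 < f x ≤ x⁻` for `x < 0`. -/
def PenaltyFun (f : ℝ → ℝ) : Prop :=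
  ContDiff ℝ 2 f ∧ Antitone f ∧
  (∃ M : ℝ, ∀ x : ℝ, |deriv f x| ≤ M ∧ |deriv (deriv f) x| ≤ M) ∧
  (∀ x : ℝ, 0 ≤ x → f x = 0) ∧
  (∀ x : ℝ, x < 0 → 0 < f x ∧ f x ≤ -x)

/-- `∫₀ᵗ x_s dy_s = 0` for all `t ∈ [0,T]`, where the integral is taken with respect to
the Lebesgue–Stieltjes measure of (any Stieltjes extension of) the nondecreasing
function `y` on `[0,T]`, extended by `0` to the left of `0` and by `y T` to the
right of `T`. -/
def StieltjesIntegralZero (T : ℝ) (x y : ℝ → ℝ) : Prop :=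
  ∀ Y : StieltjesFunction ℝ,
    (∀ t : ℝ, t ≤ 0 → Y t = 0) → (∀ t ∈ Set.Icc 0 T, Y t = y t) →
    (∀ t : ℝ, T ≤ t → Y t = y T) →
    ∀ t ∈ Set.Icc 0 T, ∫ s in Set.Icc (0 : ℝ) t, x s ∂Y.measure = 0

namespace HolderOnIcc

variable {γ a b : ℝ} {g h : ℝ → ℝ}

theorem continuousOn (hγ : 0 < γ) (hg : HolderOnIcc γ a b g) : ContinuousOn g (Icc a b) := by
  obtain ⟨C, -, hC⟩ := hg
  intro s hs
  have hbound : Tendsto (fun t => C * |t - s| ^ γ) (𝓝[Icc a b] s) (𝓝 0) := by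
    have : Continuous fun t : ℝ => C * |t - s| ^ γ := by fun_prop (disch := positivity)
    simpa [Real.zero_rpow hγ.ne'] using (this.continuousWithinAt (s := Icc a b) (x := s)).tendsto
  refine tendsto_iff_dist_tendsto_zero.2 (squeeze_zero' (by simp) ?_ hbound)
  filter_upwards [self_mem_nhdsWithin] with t ht
  simpa [Real.dist_eq] using hC s hs t ht

theorem of_le {C : ℝ} (hC : 0 ≤ C)
    (hg : ∀ s ∈ Icc a b, ∀ t ∈ Icc a b, s ≤ t → |g t - g s| ≤ C * |t - s| ^ γ) :
    HolderOnIcc γ a b g := by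
  refine ⟨C, hC, fun s hs t ht => ?_⟩
  rcases le_total s t with hst | hts
  · exact hg s hs t ht hst
  · rw [abs_sub_comm, abs_sub_comm t]
    exact hg t ht s hs hts

theorem add (hg : HolderOnIcc γ a b g) (hh : HolderOnIcc γ a b h) :
    HolderOnIcc γ a b (fun t => g t + h t) := by
  obtain ⟨C, hC0, hC⟩ := hg
  obtain ⟨D, hD0, hD⟩ := hh
  refine ⟨C + D, add_nonneg hC0 hD0, fun s hs t ht => ?_⟩
  calc |g t + h t - (g s + h s)| ≤ |g t - g s| + |h t - h s| := by
        rw [add_sub_add_comm]; exact abs_add_le _ _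
    _ ≤ C * |t - s| ^ γ + D * |t - s| ^ γ := add_le_add (hC s hs t ht) (hD s hs t ht)
    _ = (C + D) * |t - s| ^ γ := by ring

theorem const_add (c : ℝ) (hg : HolderOnIcc γ a b g) : HolderOnIcc γ a b (fun t => c + g t) := by
  simpa only [add_sub_add_left_eq_sub, HolderOnIcc] using hg

theorem of_lipschitz_bound (hγ1 : γ ≤ 1) {L : ℝ} (hL : 0 ≤ L)
    (hg : ∀ s ∈ Icc a b, ∀ t ∈ Icc a b, |g t - g s| ≤ L * |t - s|) :
    HolderOnIcc γ a b g := by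
  refine ⟨L * |b - a| ^ (1 - γ), by positivity, fun s hs t ht => ?_⟩
  have hst : |t - s| ≤ |b - a| := abs_sub_le_of_uIcc_subset_uIcc <| by
    simpa [uIcc_of_le (hs.1.trans hs.2)] using uIcc_subset_Icc hs ht
  calc |g t - g s| ≤ L * |t - s| := hg s hs t ht
    _ = L * (|t - s| ^ (1 - γ) * |t - s| ^ γ) := by
      rw [← Real.rpow_add' (abs_nonneg _) (by norm_num), sub_add_cancel, Real.rpow_one]
    _ ≤ L * (|b - a| ^ (1 - γ) * |t - s| ^ γ) := by gcongr
    _ = L * |b - a| ^ (1 - γ) * |t - s| ^ γ := by ring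

end HolderOnIcc

theorem holderOnIcc_integral {γ a b : ℝ} (hγ1 : γ ≤ 1) {g : ℝ → ℝ}
    (hg : ContinuousOn g (Icc a b)) : HolderOnIcc γ a b (fun t => ∫ s in a..t, g s) := by
  obtain ⟨M, hM⟩ := isCompact_Icc.exists_bound_of_continuousOn hg
  have hint : ∀ s ∈ Icc a b, ∀ t ∈ Icc a b, IntervalIntegrable g volume s t :=
    fun s hs t ht => (hg.mono (uIcc_subset_Icc hs ht)).intervalIntegrable
  refine HolderOnIcc.of_lipschitz_bound hγ1 (le_max_right M 0) fun s hs t ht => ?_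
  have ha : a ∈ Icc a b := ⟨le_rfl, hs.1.trans hs.2⟩
  rw [intervalIntegral.integral_interval_sub_left (hint a ha t ht) (hint a ha s hs),
    ← Real.norm_eq_abs]
  refine intervalIntegral.norm_integral_le_of_norm_le_const fun u hu => ?_
  exact (hM u (uIcc_subset_Icc hs ht (uIoc_subset_uIcc hu))).trans (le_max_left M 0)

section Reflection

variable {a b : ℝ} {G y z : ℝ → ℝ}

theorem eq_of_continuousOn_of_eqOn_Ioo {u v c : ℝ} (huv : u < v) (hy : ContinuousOn y (Icc u v))
    (hc : EqOn y (fun _ => c) (Ioo u v)) : y u = y v := by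
  have := hc.of_subset_closure hy continuousOn_const Ioo_subset_Icc_self
    (closure_Ioo huv.ne).ge
  rw [this (left_mem_Icc.2 huv.le), this (right_mem_Icc.2 huv.le)]

theorem eq_of_pos_on_Ioo (hy : ContinuousOn y (Icc a b))
    (hconst : ∀ u ∈ Icc a b, ∀ v ∈ Icc a b, u ≤ v → (∀ w ∈ Icc u v, 0 < G w) → y u = y v)
    {u v : ℝ} (hu : u ∈ Icc a b) (hv : v ∈ Icc a b) (huv : u ≤ v)
    (hG : ∀ w ∈ Ioo u v, 0 < G w) : y u = y v := by
  rcases huv.eq_or_lt with rfl | huv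
  · rfl
  have hsub : Icc u v ⊆ Icc a b := Icc_subset_Icc hu.1 hv.2
  obtain ⟨m, hm⟩ := nonempty_Ioo.2 huv
  refine eq_of_continuousOn_of_eqOn_Ioo huv (hy.mono hsub) (c := y m) fun w hw => ?_
  have hwm : Icc (min w m) (max w m) ⊆ Ioo u v :=
    Icc_subset_Ioo (lt_min hw.1 hm.1) (max_lt hw.2 hm.2)
  have key := hconst _ (hsub (Ioo_subset_Icc_self (hwm (left_mem_Icc.2 min_le_max))))
    _ (hsub (Ioo_subset_Icc_self (hwm (right_mem_Icc.2 min_le_max)))) min_le_max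
    fun w' hw' => hG w' (hwm hw')
  rcases le_total w m with h | h
  · simpa [h] using key
  · simpa [h] using key.symm

theorem holderOnIcc_of_eq_of_pos {γ : ℝ} (hγ : 0 ≤ γ) (hz : HolderOnIcc γ a b z)
    (hG : ContinuousOn G (Icc a b)) (hG0 : ∀ t ∈ Icc a b, 0 ≤ G t)
    (hconst : ∀ u ∈ Icc a b, ∀ v ∈ Icc a b, u ≤ v → (∀ w ∈ Ioo u v, 0 < G w) → y u = y v)
    (hzero : ∀ t ∈ Icc a b, G t = 0 → y t = -z t) : HolderOnIcc γ a b y := by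
  obtain ⟨C, hC0, hC⟩ := hz
  refine HolderOnIcc.of_le hC0 fun s hs t ht hst => ?_
  have hsub : Icc s t ⊆ Icc a b := Icc_subset_Icc hs.1 ht.2
  set S := Icc s t ∩ G ⁻¹' {0}
  rcases S.eq_empty_or_nonempty with hS | hS
  · have hpos : ∀ w ∈ Ioo s t, 0 < G w := fun w hw =>
      (hG0 w (hsub (Ioo_subset_Icc_self hw))).lt_of_ne' fun h =>
        hS.subset ⟨Ioo_subset_Icc_self hw, h⟩
    rw [hconst s hs t ht hst hpos, sub_self, abs_zero]
    positivity
  have hScpt : IsCompact S := isCompact_Icc.of_isClosed_subset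
    ((hG.mono hsub).preimage_isClosed_of_isClosed isClosed_Icc isClosed_singleton)
    inter_subset_left
  obtain ⟨hvS, hv0⟩ : sInf S ∈ S := hScpt.sInf_mem hS
  obtain ⟨huS, hu0⟩ : sSup S ∈ S := hScpt.sSup_mem hS
  have hpos_of_notMem : ∀ w ∈ Icc s t, w ∉ S → 0 < G w := fun w hw hwS =>
    (hG0 w (hsub hw)).lt_of_ne' fun h => hwS ⟨hw, h⟩
  have hys : y s = y (sInf S) := hconst s hs _ (hsub hvS) hvS.1 fun w hw =>
    hpos_of_notMem w ⟨hw.1.le, hw.2.le.trans hvS.2⟩ fun hwS =>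
      (csInf_le hScpt.bddBelow hwS).not_gt hw.2
  have hyt : y (sSup S) = y t := hconst _ (hsub huS) t ht huS.2 fun w hw =>
    hpos_of_notMem w ⟨huS.1.trans hw.1.le, hw.2.le⟩ fun hwS =>
      (le_csSup hScpt.bddAbove hwS).not_gt hw.1
  have hvu : |sSup S - sInf S| ≤ |t - s| := abs_sub_le_of_uIcc_subset_uIcc <|
    uIcc_subset_uIcc (Icc_subset_uIcc hvS) (Icc_subset_uIcc huS)
  calc |y t - y s| = |z (sSup S) - z (sInf S)| := by
        rw [← hyt, hys, hzero _ (hsub huS) hu0, hzero _ (hsub hvS) hv0, abs_sub_comm]; ring_nf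
    _ ≤ C * |sSup S - sInf S| ^ γ := hC _ (hsub hvS) _ (hsub huS)
    _ ≤ C * |t - s| ^ γ := by gcongr

end Reflection

theorem StieltjesFunction.measure_setOf_pos_eq_zero (Y : StieltjesFunction ℝ) {g : ℝ → ℝ}
    (hg : Continuous g) (hY : ∀ a b, a ≤ b → (∀ w ∈ Icc a b, 0 < g w) → Y a = Y b) :
    Y.measure {w | 0 < g w} = 0 := by
  refine measure_null_of_locally_null _ fun s hs => ?_
  obtain ⟨δ, hδ, hball⟩ := Metric.isOpen_iff.1 (isOpen_lt continuous_const hg) s hs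
  have hIcc : Icc (s - δ / 2) (s + δ / 2) ⊆ {w | 0 < g w} := fun w hw =>
    hball (by rw [Metric.mem_ball, Real.dist_eq, abs_lt]; constructor <;> linarith [hw.1, hw.2])
  refine ⟨Ioo (s - δ / 2) (s + δ / 2),
    mem_nhdsWithin_of_mem_nhds (Ioo_mem_nhds (by linarith) (by linarith)), ?_⟩
  refine measure_mono_null Ioo_subset_Ioc_self ?_
  rw [Y.measure_Ioc, hY _ _ (by linarith) hIcc, sub_self, ENNReal.ofReal_zero]

/-- Clamping to `[0, T]` turns the constancy of `y` off the zero set of `G` into the constancy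
of `Y` off the zero set of `G ∘ projIcc`. -/
theorem stieltjesIntegralZero_of_eq_of_pos {T : ℝ} (hT : 0 ≤ T) {G y : ℝ → ℝ}
    (hG : ContinuousOn G (Icc 0 T)) (hG0 : ∀ t ∈ Icc 0 T, 0 ≤ G t) (hy0 : y 0 = 0)
    (hconst : ∀ u ∈ Icc 0 T, ∀ v ∈ Icc 0 T, u ≤ v → (∀ w ∈ Icc u v, 0 < G w) → y u = y v) :
    StieltjesIntegralZero T G y := by
  intro Y hY0 hYy hYT t ht
  set c : ℝ → ℝ := fun w => projIcc 0 T hT w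
  have hc : Continuous c := continuous_subtype_val.comp continuous_projIcc
  have hYc : ∀ w, Y w = y (c w) := by
    intro w
    rcases le_total w 0 with hw | hw
    · simp [c, projIcc_of_le_left hT hw, hY0 w hw, hy0]
    rcases le_total w T with hw' | hw'
    · simp [c, projIcc_of_mem hT ⟨hw, hw'⟩, hYy w ⟨hw, hw'⟩]
    · simp [c, projIcc_of_right_le hT hw', hYT w hw']
  have hnull : Y.measure {w | 0 < G (c w)} = 0 := by
    refine Y.measure_setOf_pos_eq_zero (hG.comp_continuous hc fun w => (projIcc 0 T hT w).2)
      fun p q hpq hpos => ?_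
    rw [hYc, hYc]
    refine hconst _ (projIcc 0 T hT p).2 _ (projIcc 0 T hT q).2
      (monotone_projIcc hT hpq) fun w hw => ?_
    obtain ⟨w', hw', rfl⟩ := intermediate_value_Icc hpq hc.continuousOn hw
    exact hpos w' hw'
  refine setIntegral_eq_zero_of_ae_eq_zero ?_
  filter_upwards [measure_eq_zero_iff_ae_notMem.1 hnull] with w hw hwt
  have hwT : w ∈ Icc 0 T := ⟨hwt.1, hwt.2.trans ht.2⟩
  simp only [c, projIcc_of_mem hT hwT, not_lt] at hw
  exact le_antisymm hw (hG0 w hwT)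

theorem tendstoUniformlyOn_of_tendsto_sSup {ι : Type*} {l : Filter ι} {F : ι → ℝ → ℝ}
    {g : ℝ → ℝ} {s : Set ℝ} (hs : IsCompact s) (hF : ∀ᶠ i in l, ContinuousOn (F i) s)
    (hg : ContinuousOn g s)
    (h : Tendsto (fun i => sSup ((fun t => |F i t - g t|) '' s)) l (𝓝 0)) :
    TendstoUniformlyOn F g l s := by
  refine Metric.tendstoUniformlyOn_iff.2 fun δ hδ => ?_
  filter_upwards [hF, h.eventually (gt_mem_nhds hδ)] with i hi hlt t ht
  rw [Real.dist_eq, abs_sub_comm]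
  exact (le_csSup (hs.bddAbove_image ((hi.sub hg).abs)) (mem_image_of_mem _ ht)).trans_lt hlt

theorem exists_Icc_subset_of_mem_nhdsWithin_Icc {a b t : ℝ} {S : Set ℝ} (hab : a < b)
    (ht : t ∈ Icc a b) (hS : S ∈ 𝓝[Icc a b] t) : ∃ p q, p < q ∧ Icc p q ⊆ Icc a b ∩ S := by
  obtain ⟨δ, hδ, hball⟩ := Metric.mem_nhdsWithin_iff.1 hS
  refine ⟨max a (t - δ / 2), min b (t + δ / 2), ?_, fun w hw => ?_⟩
  · simp only [max_lt_iff, lt_min_iff]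
    refine ⟨⟨hab, ?_⟩, ?_, ?_⟩ <;> linarith [ht.1, ht.2]
  simp only [mem_Icc, max_le_iff, le_min_iff] at hw
  have hwab : w ∈ Icc a b := ⟨hw.1.1, hw.2.1⟩
  refine ⟨hwab, hball ⟨?_, hwab⟩⟩
  rw [Metric.mem_ball, Real.dist_eq, abs_lt]
  constructor <;> linarith

section Penalization

variable {T : ℝ} {f : ℝ → ℝ} {x : ℝ → ℝ → ℝ} {G y : ℝ → ℝ}

theorem PenaltyFun.nonneg (hf : PenaltyFun f) (u : ℝ) : 0 ≤ f u := by
  rcases lt_or_ge u 0 with hu | hu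
  · exact (hf.2.2.2.2 u hu).1.le
  · exact (hf.2.2.2.1 u hu).ge

theorem intervalIntegrable_comp_of_mem_Icc {φ g : ℝ → ℝ} (hφ : Continuous φ)
    (hg : ContinuousOn g (Icc 0 T)) {s t : ℝ} (hs : s ∈ Icc 0 T) (ht : t ∈ Icc 0 T) :
    IntervalIntegrable (fun u => φ (g u)) volume s t :=
  ((hφ.comp_continuousOn hg).mono (uIcc_subset_Icc hs ht)).intervalIntegrable

variable (hf : PenaltyFun f) (hx_cont : ∀ ε : ℝ, 0 < ε → ContinuousOn (x ε) (Icc 0 T))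
  (hlim : ∀ t ∈ Icc 0 T,
    Tendsto (fun ε => (1 / ε) * ∫ s in (0 : ℝ)..t, f (x ε s)) (𝓝[>] 0) (𝓝 (y t)))
include hf hx_cont hlim

theorem tendsto_penalty_integral_sub {s t : ℝ} (hs : s ∈ Icc 0 T) (ht : t ∈ Icc 0 T) :
    Tendsto (fun ε => (1 / ε) * ∫ u in s..t, f (x ε u)) (𝓝[>] 0) (𝓝 (y t - y s)) := by
  refine ((hlim t ht).sub (hlim s hs)).congr' ?_
  filter_upwards [self_mem_nhdsWithin] with ε hε
  have h0 : (0 : ℝ) ∈ Icc 0 T := ⟨le_rfl, hs.1.trans hs.2⟩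
  have hint := fun {r} (hr : r ∈ Icc 0 T) =>
    intervalIntegrable_comp_of_mem_Icc hf.1.continuous (hx_cont ε hε) h0 hr
  rw [← mul_sub, intervalIntegral.integral_interval_sub_left (hint ht) (hint hs)]

theorem monotoneOn_of_tendsto_penalty : MonotoneOn y (Icc 0 T) := by
  intro s hs t ht hst
  refine sub_nonneg.1 (ge_of_tendsto (tendsto_penalty_integral_sub hf hx_cont hlim hs ht) ?_)
  filter_upwards [self_mem_nhdsWithin] with ε (hε : 0 < ε)
  exact mul_nonneg (by positivity) (intervalIntegral.integral_nonneg hst fun u _ => hf.nonneg _)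

variable (hconv : TendstoUniformlyOn x G (𝓝[>] 0) (Icc 0 T)) (hG : ContinuousOn G (Icc 0 T))
include hconv hG

theorem eq_of_tendsto_penalty_of_pos {u v : ℝ} (hu : u ∈ Icc 0 T) (hv : v ∈ Icc 0 T)
    (huv : u ≤ v) (hpos : ∀ w ∈ Icc u v, 0 < G w) : y u = y v := by
  have hsub : Icc u v ⊆ Icc 0 T := Icc_subset_Icc hu.1 hv.2
  obtain ⟨w₀, hw₀, hmin⟩ := isCompact_Icc.exists_isMinOn (nonempty_Icc.2 huv) (hG.mono hsub)
  have hzero : ∀ᶠ ε in 𝓝[>] 0, (1 / ε) * ∫ w in u..v, f (x ε w) = 0 := by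
    filter_upwards [Metric.tendstoUniformlyOn_iff.1 hconv _ (hpos w₀ hw₀)] with ε hε
    rw [intervalIntegral.integral_congr (g := fun _ => 0), intervalIntegral.integral_zero,
      mul_zero]
    intro w hw
    rw [uIcc_of_le huv] at hw
    have hf_zero : ∀ u, 0 ≤ u → f u = 0 := hf.2.2.2.1
    have hGw : G w₀ ≤ G w := hmin hw
    have hclose := hε w (hsub hw)
    rw [Real.dist_eq, abs_lt] at hclose
    exact hf_zero _ (by linarith [hclose.2])
  have := tendsto_nhds_unique_of_eventuallyEq
    (tendsto_penalty_integral_sub hf hx_cont hlim hu hv) tendsto_const_nhds hzero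
  linarith

theorem nonneg_of_tendsto_penalty (hT : 0 < T) {t : ℝ} (ht : t ∈ Icc 0 T) : 0 ≤ G t := by
  have hf_anti : Antitone f := hf.2.1
  have hf_pos : ∀ u < 0, 0 < f u := fun u hu => (hf.2.2.2.2 u hu).1
  by_contra! hneg
  obtain ⟨p, q, hpq, hsub⟩ := exists_Icc_subset_of_mem_nhdsWithin_Icc hT ht
    ((hG t ht).eventually (gt_mem_nhds (show G t < G t / 2 by linarith)))
  set m := -G t / 4 with hm_def
  have hm : 0 < m := by linarith
  have hfm : 0 < f (-m) := hf_pos _ (by linarith)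
  have hp : p ∈ Icc 0 T := (hsub (left_mem_Icc.2 hpq.le)).1
  have hq : q ∈ Icc 0 T := (hsub (right_mem_Icc.2 hpq.le)).1
  have hlower : ∀ᶠ ε in 𝓝[>] 0,
      (1 / ε) * ((q - p) * f (-m)) ≤ (1 / ε) * ∫ w in p..q, f (x ε w) := by
    filter_upwards [self_mem_nhdsWithin, Metric.tendstoUniformlyOn_iff.1 hconv m hm]
      with ε (hε : 0 < ε) hclose
    refine mul_le_mul_of_nonneg_left ?_ (by positivity)
    rw [← smul_eq_mul, ← intervalIntegral.integral_const]
    refine intervalIntegral.integral_mono_on hpq.le intervalIntegrable_const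
      (intervalIntegrable_comp_of_mem_Icc hf.1.continuous (hx_cont ε hε) hp hq) fun w hw => ?_
    have hGw : G w < G t / 2 := (hsub hw).2
    have hw' := hclose w (hsub hw).1
    rw [Real.dist_eq, abs_lt] at hw'
    exact hf_anti (by linarith [hw'.1])
  have hblow : Tendsto (fun ε => (1 / ε) * ((q - p) * f (-m))) (𝓝[>] 0) atTop := by
    simpa only [one_div] using tendsto_inv_nhdsGT_zero.atTop_mul_const (by positivity)
  exact not_tendsto_atTop_of_tendsto_nhds (tendsto_penalty_integral_sub hf hx_cont hlim hp hq)
    (tendsto_atTop_mono' _ hlower hblow)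

end Penalization

theorem tendsto_penalty_integral {T η₀ : ℝ} {b ζ f G : ℝ → ℝ} {K : NNReal} {x : ℝ → ℝ → ℝ}
    (hb : LipschitzWith K b) (hf : Continuous f)
    (hx_cont : ∀ ε : ℝ, 0 < ε → ContinuousOn (x ε) (Icc 0 T))
    (hx : ∀ ε : ℝ, 0 < ε → ∀ t ∈ Icc 0 T,
      x ε t = η₀ + ζ t + ∫ s in (0 : ℝ)..t, (b (x ε s) + (1 / ε) * f (x ε s)))
    (hconv : TendstoUniformlyOn x G (𝓝[>] 0) (Icc 0 T)) {t : ℝ} (ht : t ∈ Icc 0 T) :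
    Tendsto (fun ε => (1 / ε) * ∫ s in (0 : ℝ)..t, f (x ε s)) (𝓝[>] 0)
      (𝓝 (G t - (η₀ + ζ t + ∫ s in (0 : ℝ)..t, b (G s)))) := by
  have h0 : (0 : ℝ) ∈ Icc 0 T := ⟨le_rfl, ht.1.trans ht.2⟩
  have hb_int : Tendsto (fun ε => ∫ s in (0 : ℝ)..t, b (x ε s)) (𝓝[>] 0)
      (𝓝 (∫ s in (0 : ℝ)..t, b (G s))) := by
    refine ((hb.uniformContinuous.comp_tendstoUniformlyOn hconv).mono
      (uIcc_subset_Icc h0 ht)).tendsto_intervalIntegral_of_continuousOn ?_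
    filter_upwards [self_mem_nhdsWithin] with ε hε
    exact (hb.continuous.comp_continuousOn (hx_cont ε hε)).mono (uIcc_subset_Icc h0 ht)
  refine ((hconv.tendsto_at ht).sub (tendsto_const_nhds.add hb_int)).congr' ?_
  filter_upwards [self_mem_nhdsWithin] with ε hε
  rw [hx ε hε t ht, intervalIntegral.integral_add
    (intervalIntegrable_comp_of_mem_Icc hb.continuous (hx_cont ε hε) h0 ht)
    ((intervalIntegrable_comp_of_mem_Icc hf (hx_cont ε hε) h0 ht).const_mul _),
    intervalIntegral.integral_const_mul]
  ring

theorem limit_solves_skorokhod_general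
    (α T η₀ : ℝ) (hα : α ∈ Set.Ioo (0 : ℝ) (1 / 2)) (hT : 0 < T)
    (b : ℝ → ℝ) (K : NNReal) (hb : LipschitzWith K b)
    (ζ : ℝ → ℝ) (hζ : HolderOnIcc (1 - α) 0 T ζ)
    (f : ℝ → ℝ) (hf : PenaltyFun f)
    (x : ℝ → ℝ → ℝ)
    (hx_cont : ∀ ε : ℝ, 0 < ε → ContinuousOn (x ε) (Set.Icc 0 T))
    (hx : ∀ ε : ℝ, 0 < ε → ∀ t ∈ Set.Icc 0 T,
      x ε t = η₀ + ζ t + ∫ s in (0 : ℝ)..t, (b (x ε s) + (1 / ε) * f (x ε s)))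
    (G : ℝ → ℝ) (hG_cont : ContinuousOn G (Set.Icc 0 T))
    (hG_lim : Filter.Tendsto (fun ε => sSup ((fun t => |x ε t - G t|) '' Set.Icc 0 T))
      (nhdsWithin 0 (Set.Ioi 0)) (nhds 0)) :
    ∃ y : ℝ → ℝ,
      (∀ t ∈ Set.Icc 0 T,
        Filter.Tendsto (fun ε => (1 / ε) * ∫ s in (0 : ℝ)..t, f (x ε s))
          (nhdsWithin 0 (Set.Ioi 0)) (nhds (y t))) ∧
      (∀ t ∈ Set.Icc 0 T, 0 ≤ G t) ∧
      (∀ t ∈ Set.Icc 0 T,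
        G t = η₀ + ζ t + (∫ s in (0 : ℝ)..t, b (G s)) + y t) ∧
      y 0 = 0 ∧ ContinuousOn y (Set.Icc 0 T) ∧ MonotoneOn y (Set.Icc 0 T) ∧
      StieltjesIntegralZero T G y ∧
      HolderOnIcc (1 - α) 0 T G := by
  have hγ : 0 < 1 - α := by linarith [hα.2]
  have hconv : TendstoUniformlyOn x G (𝓝[>] 0) (Icc 0 T) :=
    tendstoUniformlyOn_of_tendsto_sSup isCompact_Icc
      (eventually_mem_nhdsWithin.mono hx_cont) hG_cont hG_lim
  set z : ℝ → ℝ := fun t => η₀ + ζ t + ∫ s in (0 : ℝ)..t, b (G s)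
  have hz : HolderOnIcc (1 - α) 0 T z := (hζ.const_add η₀).add
    (holderOnIcc_integral (by linarith [hα.1]) (hb.continuous.comp_continuousOn hG_cont))
  set y : ℝ → ℝ := fun t => G t - z t
  have hlim : ∀ t ∈ Icc 0 T, Tendsto (fun ε => (1 / ε) * ∫ s in (0 : ℝ)..t, f (x ε s))
      (𝓝[>] 0) (𝓝 (y t)) := fun t ht =>
    tendsto_penalty_integral hb hf.1.continuous hx_cont hx hconv ht
  have hG0 : ∀ t ∈ Icc 0 T, 0 ≤ G t := fun t ht =>
    nonneg_of_tendsto_penalty hf hx_cont hlim hconv hG_cont hT ht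
  have hconst : ∀ u ∈ Icc 0 T, ∀ v ∈ Icc 0 T, u ≤ v → (∀ w ∈ Icc u v, 0 < G w) → y u = y v :=
    fun u hu v hv => eq_of_tendsto_penalty_of_pos hf hx_cont hlim hconv hG_cont hu hv
  have hy_cont : ContinuousOn y (Icc 0 T) := hG_cont.sub (hz.continuousOn hγ)
  have hy0 : y 0 = 0 := tendsto_nhds_unique (hlim 0 ⟨le_rfl, hT.le⟩) (by simp)
  have hyH : HolderOnIcc (1 - α) 0 T y :=
    holderOnIcc_of_eq_of_pos hγ.le hz hG_cont hG0
      (fun u hu v hv huv => eq_of_pos_on_Ioo hy_cont hconst hu hv huv)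
      fun t _ hGt => by simp [y, hGt]
  refine ⟨y, hlim, hG0, fun t _ => by simp only [y, z]; ring, hy0, hy_cont,
    monotoneOn_of_tendsto_penalty hf hx_cont hlim,
    stieltjesIntegralZero_of_eq_of_pos hT.le hG_cont hG0 hy0 hconst, ?_⟩
  simpa [y] using hz.add hyH

/-- The uniform limit `G` of the penalized solutions solves the Skorokhod problem for
`z_t = η₀ + ζ_t + ∫₀ᵗ b(G_s) ds` and is `(1-α)`-Hölder continuous. -/
theorem limit_solves_skorokhod
    (α T η₀ : ℝ) (hα : α ∈ Set.Ioo (0 : ℝ) (1 / 2)) (hT : 0 < T) (hη : 0 ≤ η₀)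
    (b : ℝ → ℝ) (K : NNReal) (hb : LipschitzWith K b)
    (ζ : ℝ → ℝ) (hζ : HolderOnIcc (1 - α) 0 T ζ) (hζ0 : ζ 0 = 0)
    (f : ℝ → ℝ) (hf : PenaltyFun f)
    (x : ℝ → ℝ → ℝ)
    (hx_cont : ∀ ε : ℝ, 0 < ε → ContinuousOn (x ε) (Set.Icc 0 T))
    (hx : ∀ ε : ℝ, 0 < ε → ∀ t ∈ Set.Icc 0 T,
      x ε t = η₀ + ζ t + ∫ s in (0 : ℝ)..t, (b (x ε s) + (1 / ε) * f (x ε s)))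
    (G : ℝ → ℝ) (hG_cont : ContinuousOn G (Set.Icc 0 T))
    (hG_lim : Filter.Tendsto (fun ε => sSup ((fun t => |x ε t - G t|) '' Set.Icc 0 T))
      (nhdsWithin 0 (Set.Ioi 0)) (nhds 0)) :
    ∃ y : ℝ → ℝ,
      (∀ t ∈ Set.Icc 0 T,
        Filter.Tendsto (fun ε => (1 / ε) * ∫ s in (0 : ℝ)..t, f (x ε s))
          (nhdsWithin 0 (Set.Ioi 0)) (nhds (y t))) ∧
      (∀ t ∈ Set.Icc 0 T, 0 ≤ G t) ∧
      (∀ t ∈ Set.Icc 0 T,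
        G t = η₀ + ζ t + (∫ s in (0 : ℝ)..t, b (G s)) + y t) ∧
      y 0 = 0 ∧ ContinuousOn y (Set.Icc 0 T) ∧ MonotoneOn y (Set.Icc 0 T) ∧
      StieltjesIntegralZero T G y ∧
      HolderOnIcc (1 - α) 0 T G :=
  limit_solves_skorokhod_general α T η₀ hα hT b K hb ζ hζ f hf x hx_cont hx G hG_cont hG_lim
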